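/- arXiv:1506.03895 — 2 statements merged into one kernel-verified Lean document; each statement's English description precedes it below -/
import Mathlib

section
/- Let X be a first countable topological space, Φ a set of homeomorphisms of X acting on X, and f : X → Φ\X the quotient map. Then a sequence y_i converges to y in Φ\X if and only if there exist x_i → x in X with f(x_i) = y_i (for all sufficiently large i) and f(x) = y. -/
/-!
The orbit relation of `Φ` is realized by the group generated by `Φ`, whose elements are
homeomorphisms preserving orbits; hence the saturation of an open set is a union of its
homeomorphic images, and the quotient map is open. For an open map `f` every neighbourhood
`f '' U` of `f p` is an image of a neighbourhood of `p`, so along a countable antitone basis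
`U n` of `𝓝 p` the terms `y i` eventually lie in `f '' U n`; a diagonal choice of indices then
lifts `y` to a sequence converging to `p`.
-/

open Filter Topology Set

theorem Filter.exists_tendsto_atTop_eventually_diag {p : ℕ → ℕ → Prop}
    (hp : ∀ n, ∀ᶠ i in atTop, p n i) :
    ∃ m : ℕ → ℕ, Tendsto m atTop atTop ∧ ∀ᶠ i in atTop, p (m i) i := by
  classical
  choose N hN using fun n => eventually_atTop.mp (hp n)
  refine ⟨fun i => Nat.findGreatest (p · i) i, tendsto_atTop.mpr fun n => ?_, ?_⟩
  · filter_upwards [eventually_ge_atTop (max n (N n))] with i hi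
    exact Nat.le_findGreatest (le_of_max_le_left hi) (hN n i (le_of_max_le_right hi))
  · filter_upwards [eventually_ge_atTop (N 0)] with i hi
    exact Nat.findGreatest_spec (P := (p · i)) (Nat.zero_le i) (hN 0 i hi)

theorem Filter.Tendsto.exists_lift_of_tendsto_map {X Y : Type*} {f : X → Y} {L : Filter X}
    [L.IsCountablyGenerated] {y : ℕ → Y} (hy : Tendsto y atTop (map f L)) :
    ∃ x : ℕ → X, Tendsto x atTop L ∧ ∀ᶠ i in atTop, f (x i) = y i := by
  have : Nonempty X := (map_neBot_iff f).mp hy.neBot |>.nonempty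
  obtain ⟨U, hU⟩ := L.exists_antitone_basis
  obtain ⟨m, hm, hym⟩ :=
    exists_tendsto_atTop_eventually_diag fun n => hy (image_mem_map (hU.mem n))
  let x i := Classical.epsilon fun z => z ∈ U (m i) ∧ f z = y i
  have hx : ∀ᶠ i in atTop, x i ∈ U (m i) ∧ f (x i) = y i := by
    filter_upwards [hym] with i ⟨z, hz⟩
    exact Classical.epsilon_spec (p := fun z => z ∈ U (m i) ∧ f z = y i) ⟨z, hz⟩
  refine ⟨x, hU.tendsto_right_iff.mpr fun n _ => ?_, hx.mono fun i hi => hi.2⟩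
  filter_upwards [hx, hm.eventually_ge_atTop n] with i hi hni
  exact hU.antitone hni hi.1

theorem IsOpenQuotientMap.tendsto_nhds_iff_exists_lift {X Y : Type*} [TopologicalSpace X]
    [FirstCountableTopology X] [TopologicalSpace Y] {f : X → Y} (hf : IsOpenQuotientMap f)
    (y : ℕ → Y) (l : Y) :
    Tendsto y atTop (𝓝 l) ↔
      ∃ (x : ℕ → X) (p : X), Tendsto x atTop (𝓝 p) ∧ (∀ᶠ i in atTop, f (x i) = y i) ∧
        f p = l := by
  constructor
  · intro hy
    obtain ⟨p, rfl⟩ := hf.surjective l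
    obtain ⟨x, hx, hfx⟩ := (hy.mono_right (hf.isOpenMap.nhds_le p)).exists_lift_of_tendsto_map
    exact ⟨x, p, hx, hfx, rfl⟩
  · rintro ⟨x, p, hx, hfx, rfl⟩
    exact ((hf.continuous.tendsto p).comp hx).congr' hfx

namespace Homeomorph

variable {X : Type*} [TopologicalSpace X]

def stepRel (Φ : Set (X ≃ₜ X)) (x y : X) : Prop :=
  ∃ φ ∈ Φ, φ x = y

theorem quot_mk_apply_of_mem_closure {Φ : Set (X ≃ₜ X)} {ψ : X ≃ₜ X}
    (hψ : ψ ∈ Subgroup.closure Φ) (z : X) :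
    Quot.mk (stepRel Φ) (ψ z) = Quot.mk (stepRel Φ) z := by
  induction hψ using Subgroup.closure_induction generalizing z with
  | mem φ hφ => exact (Quot.sound ⟨φ, hφ, rfl⟩).symm
  | one => rfl
  | mul ψ₁ ψ₂ _ _ ih₁ ih₂ => exact (ih₁ (ψ₂ z)).trans (ih₂ z)
  | inv ψ _ ih => rw [← ih (ψ⁻¹ z), inv_apply, apply_symm_apply]

theorem exists_mem_closure_apply_eq_of_eqvGen {Φ : Set (X ≃ₜ X)} {a b : X}
    (h : Relation.EqvGen (stepRel Φ) a b) : ∃ ψ ∈ Subgroup.closure Φ, ψ a = b := by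
  induction h with
  | rel a b hab =>
    obtain ⟨φ, hφ, rfl⟩ := hab
    exact ⟨φ, Subgroup.subset_closure hφ, rfl⟩
  | refl a => exact ⟨1, Subgroup.one_mem _, rfl⟩
  | symm a b _ ih =>
    obtain ⟨ψ, hψ, rfl⟩ := ih
    exact ⟨ψ⁻¹, inv_mem hψ, ψ.symm_apply_apply a⟩
  | trans a b c _ _ ih₁ ih₂ =>
    obtain ⟨ψ₁, hψ₁, rfl⟩ := ih₁
    obtain ⟨ψ₂, hψ₂, rfl⟩ := ih₂
    exact ⟨ψ₂ * ψ₁, mul_mem hψ₂ hψ₁, rfl⟩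

theorem preimage_image_quot_mk_stepRel (Φ : Set (X ≃ₜ X)) (U : Set X) :
    Quot.mk (stepRel Φ) ⁻¹' (Quot.mk (stepRel Φ) '' U) =
      ⋃ ψ ∈ Subgroup.closure Φ, ψ '' U := by
  ext z
  simp only [mem_preimage, mem_image, mem_iUnion, exists_prop]
  constructor
  · rintro ⟨u, hu, huz⟩
    obtain ⟨ψ, hψ, rfl⟩ := exists_mem_closure_apply_eq_of_eqvGen (Quot.eq.mp huz)
    exact ⟨ψ, hψ, u, hu, rfl⟩
  · rintro ⟨ψ, hψ, u, hu, rfl⟩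
    exact ⟨u, hu, (quot_mk_apply_of_mem_closure hψ u).symm⟩

theorem isOpenQuotientMap_quot_mk_stepRel (Φ : Set (X ≃ₜ X)) :
    IsOpenQuotientMap (Quot.mk (stepRel Φ)) := by
  refine ⟨Quot.mk_surjective, continuous_quot_mk, fun U hU => ?_⟩
  rw [← isQuotientMap_quot_mk.isOpen_preimage, preimage_image_quot_mk_stepRel]
  exact isOpen_biUnion fun ψ _ => ψ.isOpenMap U hU

end Homeomorph

theorem stmt2 {X : Type*} [TopologicalSpace X] [FirstCountableTopology X]
    (Φ : Set (X ≃ₜ X))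
    (y : ℕ → Quot (fun x y : X => ∃ φ ∈ Φ, φ x = y))
    (l : Quot (fun x y : X => ∃ φ ∈ Φ, φ x = y)) :
    Filter.Tendsto y Filter.atTop (nhds l) ↔
      ∃ (x : ℕ → X) (p : X), Filter.Tendsto x Filter.atTop (nhds p) ∧
        (∀ᶠ i in Filter.atTop, Quot.mk (fun x y : X => ∃ φ ∈ Φ, φ x = y) (x i) = y i) ∧
        Quot.mk (fun x y : X => ∃ φ ∈ Φ, φ x = y) p = l :=
  (Homeomorph.isOpenQuotientMap_quot_mk_stepRel Φ).tendsto_nhds_iff_exists_lift y l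
end

section
/- Let Ω ⊆ ℝⁿ be an open convex set containing 0, and let v : Ω → ℝ be a differentiable convex function with v ≥ −1, v < 0 on Ω, and such that for some ε, γ > 0 the sphere {|x| = ε} is contained in Ω and (1/ε)·x·∇v(x) > γ for all |x| = ε. Then Ω is contained in the ball of radius ε + 1/γ centered at 0. -/
/-!
Restrict `v` to the ray through a point `x ∈ Ω` with `‖x‖ ≥ ε`: it meets the sphere
`‖y‖ = ε` at `y = (ε / ‖x‖) • x`, and convexity along the ray bounds `v x - v y` below by
the radial derivative at `y` times `‖x‖ / ε - 1`, hence by `γ (‖x‖ - ε)`.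
Since `v x - v y < 0 - (-1) = 1`, this forces `‖x‖ - ε < 1 / γ`.
-/

section

variable {E : Type*} [NormedAddCommGroup E] [NormedSpace ℝ E]

theorem ConvexOn.fderiv_sub_le_sub {s : Set E} {f : E → ℝ} (hf : ConvexOn ℝ s f)
    {x y : E} (hx : x ∈ s) (hy : y ∈ s) (hfy : DifferentiableAt ℝ f y) :
    fderiv ℝ f y (x - y) ≤ f x - f y := by
  set L : ℝ →ᵃ[ℝ] E := AffineMap.lineMap y x
  have hL : ∀ t : ℝ, L t = t • (x - y) + y := fun t => by
    simp [L, AffineMap.lineMap_apply, vsub_eq_sub, vadd_eq_add]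
  have h0 : (0 : ℝ) ∈ L ⁻¹' s := by simpa [hL] using hy
  have h1 : (1 : ℝ) ∈ L ⁻¹' s := by simpa [hL] using hx
  have hderiv : HasDerivAt (f ∘ L) (fderiv ℝ f y (x - y)) 0 := by
    have hL' : HasDerivAt (fun t : ℝ => t • (x - y) + y) (x - y) 0 := by
      simpa using ((hasDerivAt_id (0 : ℝ)).smul_const (x - y)).add_const y
    have hfy' : HasFDerivAt f (fderiv ℝ f y) ((0 : ℝ) • (x - y) + y) := by
      simpa using hfy.hasFDerivAt
    simpa only [Function.comp_def, hL] using hfy'.comp_hasDerivAt 0 hL'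
  simpa [slope_def_field, hL] using
    (hf.comp_affineMap L).le_slope_of_hasDerivAt h0 h1 one_pos hderiv

theorem ConvexOn.sub_one_mul_fderiv_le_sub {s : Set E} {f : E → ℝ} (hf : ConvexOn ℝ s f)
    {y : E} {t : ℝ} (hy : y ∈ s) (hty : t • y ∈ s) (hfy : DifferentiableAt ℝ f y) :
    (t - 1) * fderiv ℝ f y y ≤ f (t • y) - f y := by
  have hsub : t • y - y = (t - 1) • y := by rw [sub_smul, one_smul]
  simpa [hsub] using hf.fderiv_sub_le_sub hty hy hfy

theorem ConvexOn.norm_lt_of_radial_fderiv_lower_bound {Ω : Set E} {v : E → ℝ}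
    (hconv : ConvexOn ℝ Ω v) {ε γ : ℝ} (hε : 0 < ε) (hγ : 0 < γ)
    (hsph : ∀ y : E, ‖y‖ = ε → y ∈ Ω)
    (hdiff : ∀ y : E, ‖y‖ = ε → DifferentiableAt ℝ v y)
    (hgrad : ∀ y : E, ‖y‖ = ε → ε * γ ≤ fderiv ℝ v y y)
    (hlb : ∀ y : E, ‖y‖ = ε → -1 ≤ v y) (hub : ∀ x ∈ Ω, v x < 0)
    {x : E} (hx : x ∈ Ω) : ‖x‖ < ε + 1 / γ := by
  rcases lt_or_ge ‖x‖ ε with hxε | hεx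
  · linarith [one_div_pos.mpr hγ]
  have hxpos : 0 < ‖x‖ := hε.trans_le hεx
  set y : E := (ε / ‖x‖) • x
  have hy : ‖y‖ = ε := by
    rw [norm_smul, Real.norm_eq_abs, abs_of_pos (by positivity), div_mul_cancel₀ _ hxpos.ne']
  have hxy : (‖x‖ / ε) • y = x := by
    rw [smul_smul, div_mul_div_cancel₀' hxpos.ne', div_self hε.ne', one_smul]
  have hray := hconv.sub_one_mul_fderiv_le_sub (hsph y hy) (hxy ▸ hx) (hdiff y hy)
  rw [hxy] at hray
  have hgap : (‖x‖ - ε) * γ < 1 := calc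
    (‖x‖ - ε) * γ = (‖x‖ / ε - 1) * (ε * γ) := by field_simp
    _ ≤ (‖x‖ / ε - 1) * fderiv ℝ v y y := by
      gcongr
      · exact sub_nonneg.mpr ((one_le_div hε).mpr hεx)
      · exact hgrad y hy
    _ ≤ v x - v y := hray
    _ < 1 := by linarith [hub x hx, hlb y hy]
  rw [← lt_div_iff₀ hγ] at hgap
  linarith

end

theorem stmt17_general (n : ℕ) (Ω : Set (EuclideanSpace ℝ (Fin n)))
    (v : EuclideanSpace ℝ (Fin n) → ℝ)
    (hdiff : ∀ x ∈ Ω, DifferentiableAt ℝ v x)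
    (hconv : ConvexOn ℝ Ω v)
    (hlb : ∀ x ∈ Ω, -1 ≤ v x) (hub : ∀ x ∈ Ω, v x < 0)
    (ε γ : ℝ) (hε : 0 < ε) (hγ : 0 < γ)
    (hsph : ∀ x : EuclideanSpace ℝ (Fin n), ‖x‖ = ε → x ∈ Ω)
    (hgrad : ∀ x : EuclideanSpace ℝ (Fin n), ‖x‖ = ε → γ < (1 / ε) * fderiv ℝ v x x) :
    Ω ⊆ Metric.ball 0 (ε + 1 / γ) := by
  intro x hx
  rw [Metric.mem_ball, dist_zero_right]
  refine hconv.norm_lt_of_radial_fderiv_lower_bound hε hγ hsph (fun y hy => hdiff y (hsph y hy))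
    (fun y hy => ?_) (fun y hy => hlb y (hsph y hy)) hub hx
  have h := hgrad y hy
  rw [one_div, ← div_eq_inv_mul, lt_div_iff₀ hε] at h
  linarith

theorem stmt17 (n : ℕ) (Ω : Set (EuclideanSpace ℝ (Fin n)))
    (hΩo : IsOpen Ω) (hΩc : Convex ℝ Ω) (h0 : (0 : EuclideanSpace ℝ (Fin n)) ∈ Ω)
    (v : EuclideanSpace ℝ (Fin n) → ℝ)
    (hdiff : ∀ x ∈ Ω, DifferentiableAt ℝ v x)
    (hconv : ConvexOn ℝ Ω v)
    (hlb : ∀ x ∈ Ω, -1 ≤ v x) (hub : ∀ x ∈ Ω, v x < 0)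
    (ε γ : ℝ) (hε : 0 < ε) (hγ : 0 < γ)
    (hsph : ∀ x : EuclideanSpace ℝ (Fin n), ‖x‖ = ε → x ∈ Ω)
    (hgrad : ∀ x : EuclideanSpace ℝ (Fin n), ‖x‖ = ε → γ < (1 / ε) * fderiv ℝ v x x) :
    Ω ⊆ Metric.ball 0 (ε + 1 / γ) :=
  stmt17_general n Ω v hdiff hconv hlb hub ε γ hε hγ hsph hgrad
end
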